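/- Let V be a finite-dimensional real vector space with a nondegenerate quadratic form Q of signature (p,m), where p ≥ 1 and m ≥ 0. Then the union of all p-dimensional subspaces of V on which Q is positive definite spans V as a vector space. -/

import Mathlib

open QuadraticMap

/-- `Q` has signature `(p, q)`: there is an orthogonal basis with `p` vectors of
square `1` and `q` vectors of square `-1`. -/
def HasSignature {V : Type*} [AddCommGroup V] [Module ℝ V]
    (Q : QuadraticForm ℝ V) (p q : ℕ) : Prop :=
  ∃ b : Module.Basis (Fin p ⊕ Fin q) ℝ V,
    (∀ i j, i ≠ j → polar Q (b i) (b j) = 0) ∧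
    (∀ i, Q (b (Sum.inl i)) = 1) ∧ (∀ j, Q (b (Sum.inr j)) = -1)

/-! If `e₁, …, e_p, f₁, …, f_m` is a signature basis, the `eᵢ` span a positive `p`-plane, and so
does the plane obtained by replacing `e₁` with `e₁ + f_j / 2`, whose square is `3 / 4`. Hence every
`eᵢ` and every `f_j = 2 ((e₁ + f_j / 2) - e₁)` lies in the span of the positive `p`-planes.
On the span of a pairwise orthogonal family of positive vectors `Q` is a sum of positive squares,
which gives both the positivity of such a plane and its dimension. -/

namespace QuadraticMap

section CommRing

variable {R M ι : Type*} [CommRing R] [AddCommGroup M] [Module R M] {Q : QuadraticForm R M}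
  {x : ι → M}

theorem map_sum_smul_of_pairwise_polar_eq_zero [DecidableEq ι]
    (hx : Pairwise fun i j => polar Q (x i) (x j) = 0) (a : ι → R) (s : Finset ι) :
    Q (∑ i ∈ s, a i • x i) = ∑ i ∈ s, a i * a i * Q (x i) := by
  have cross_terms :
      ∑ ij ∈ s.sym2 with ¬ ij.IsDiag, polarSym2 Q (ij.map fun i => a i • x i) = 0 := by
    refine Finset.sum_eq_zero fun z hz => ?_
    induction z using Sym2.ind with
    | h i j =>
      have hij : i ≠ j := by simpa using (Finset.mem_filter.mp hz).2
      simp [polarSym2_sym2Mk, polar_smul_left, polar_smul_right, hx hij]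
  simp only [Q.map_sum, cross_terms, add_zero, QuadraticMap.map_smul, smul_eq_mul]

theorem pairwise_polar_update_eq_zero [DecidableEq ι]
    (hx : Pairwise fun i j => polar Q (x i) (x j) = 0) {i : ι} {y : M}
    (hy : ∀ j ≠ i, polar Q y (x j) = 0) :
    Pairwise fun j k => polar Q (Function.update x i y j) (Function.update x i y k) = 0 := by
  intro j k hjk
  rcases eq_or_ne j i with rfl | hj
  · simp [Function.update_of_ne hjk.symm, hy k hjk.symm]
  rcases eq_or_ne k i with rfl | hk
  · simp [Function.update_of_ne hj, polar_comm Q (x j), hy j hj]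
  · simp [Function.update_of_ne hj, Function.update_of_ne hk, hx hjk]

theorem pairwise_polar_update_add_smul_eq_zero [DecidableEq ι]
    (hx : Pairwise fun i j => polar Q (x i) (x j) = 0) {y : M} (hy : ∀ k, polar Q (x k) y = 0)
    (i : ι) (t : R) :
    Pairwise fun j k =>
      polar Q (Function.update x i (x i + t • y) j) (Function.update x i (x i + t • y) k) = 0 :=
  pairwise_polar_update_eq_zero hx fun k hk => by
    simp [polar_add_left, polar_smul_left, hx hk.symm, polar_comm Q y, hy]

end CommRing

section Real

variable {V ι : Type*} [AddCommGroup V] [Module ℝ V] {Q : QuadraticForm ℝ V}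
  {x : ι → V}

theorem eq_zero_of_map_sum_smul_nonpos [Fintype ι]
    (hx : Pairwise fun i j => polar Q (x i) (x j) = 0) (hpos : ∀ i, 0 < Q (x i)) {a : ι → ℝ}
    (ha : Q (∑ i, a i • x i) ≤ 0) : a = 0 := by
  classical
  rw [map_sum_smul_of_pairwise_polar_eq_zero hx] at ha
  have hterms := (Finset.sum_eq_zero_iff_of_nonneg fun i _ =>
    mul_nonneg (mul_self_nonneg (a i)) (hpos i).le).mp
    (ha.antisymm (Finset.sum_nonneg fun i _ => mul_nonneg (mul_self_nonneg (a i)) (hpos i).le))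
  funext i
  simpa [(hpos i).ne'] using hterms i (Finset.mem_univ i)

theorem linearIndependent_of_pairwise_polar_eq_zero [Fintype ι]
    (hx : Pairwise fun i j => polar Q (x i) (x j) = 0) (hpos : ∀ i, 0 < Q (x i)) :
    LinearIndependent ℝ x :=
  Fintype.linearIndependent_iff.mpr fun a ha =>
    congrFun (eq_zero_of_map_sum_smul_nonpos hx hpos (by rw [ha, map_zero]))

theorem pos_of_mem_span_of_pairwise_polar_eq_zero [Fintype ι]
    (hx : Pairwise fun i j => polar Q (x i) (x j) = 0) (hpos : ∀ i, 0 < Q (x i))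
    {w : V} (hw : w ∈ Submodule.span ℝ (Set.range x)) (hw0 : w ≠ 0) : 0 < Q w := by
  obtain ⟨a, rfl⟩ := (Submodule.mem_span_range_iff_exists_fun ℝ).mp hw
  by_contra! hQ
  simp [eq_zero_of_map_sum_smul_nonpos hx hpos hQ] at hw0

theorem exists_finrank_eq_card_of_pairwise_polar_eq_zero [Fintype ι]
    (hx : Pairwise fun i j => polar Q (x i) (x j) = 0) (hpos : ∀ i, 0 < Q (x i)) (i : ι) :
    ∃ W : Submodule ℝ V, Module.finrank ℝ W = Fintype.card ι ∧
      (∀ w ∈ W, w ≠ 0 → 0 < Q w) ∧ x i ∈ W :=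
  ⟨Submodule.span ℝ (Set.range x),
    finrank_span_eq_card (linearIndependent_of_pairwise_polar_eq_zero hx hpos),
    fun _ => pos_of_mem_span_of_pairwise_polar_eq_zero hx hpos,
    Submodule.subset_span ⟨i, rfl⟩⟩

theorem pos_update_add_smul [DecidableEq ι] (hpos : ∀ k, 0 < Q (x k)) {y : V}
    (hy : ∀ k, polar Q (x k) y = 0) {i : ι} {t : ℝ} (ht : 0 < Q (x i) + t * t * Q y) (k : ι) :
    0 < Q (Function.update x i (x i + t • y) k) := by
  rcases eq_or_ne k i with rfl | hk
  · simpa [QuadraticMap.map_add, QuadraticMap.map_smul, polar_smul_right, hy] using ht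
  · simpa [hk] using hpos k

end Real

end QuadraticMap

theorem positive_planes_span_general
    {V : Type*} [AddCommGroup V] [Module ℝ V]
    (p m : ℕ) (hp : 1 ≤ p)
    (Q : QuadraticForm ℝ V) (hsig : HasSignature Q p m) :
    Submodule.span ℝ {v : V | ∃ W : Submodule ℝ V,
      Module.finrank ℝ W = p ∧ (∀ w ∈ W, w ≠ 0 → 0 < Q w) ∧ v ∈ W} = ⊤ := by
  obtain ⟨b, horth, hpos, hneg⟩ := hsig
  set S := {v : V | ∃ W : Submodule ℝ V,
      Module.finrank ℝ W = p ∧ (∀ w ∈ W, w ≠ 0 → 0 < Q w) ∧ v ∈ W}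
  have family_mem : ∀ x : Fin p → V, (Pairwise fun i j => polar Q (x i) (x j) = 0) →
      (∀ i, 0 < Q (x i)) → ∀ i, x i ∈ Submodule.span ℝ S := fun x hx hxpos i =>
    Submodule.subset_span <| by
      simpa only [S, Set.mem_ofPred_eq, Fintype.card_fin] using
        exists_finrank_eq_card_of_pairwise_polar_eq_zero hx hxpos i
  have horth_inl : Pairwise fun i j => polar Q (b (.inl i)) (b (.inl j)) = 0 :=
    fun i j hij => horth _ _ (Sum.inl_injective.ne hij)
  have hpos_inl : ∀ i, 0 < Q (b (.inl i)) := by simp [hpos]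
  have mem_inl : ∀ i, b (.inl i) ∈ Submodule.span ℝ S := family_mem _ horth_inl hpos_inl
  have mem_inr : ∀ j, b (.inr j) ∈ Submodule.span ℝ S := by
    classical
    intro j
    let i₀ : Fin p := ⟨0, hp⟩
    have horth_inr : ∀ i, polar Q (b (.inl i)) (b (.inr j)) = 0 := fun i =>
      horth _ _ Sum.inl_ne_inr
    have htilt_mem : b (.inl i₀) + (2⁻¹ : ℝ) • b (.inr j) ∈ Submodule.span ℝ S := by
      simpa using family_mem _ (pairwise_polar_update_add_smul_eq_zero horth_inl horth_inr i₀ _)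
        (pos_update_add_smul hpos_inl horth_inr (by norm_num [hpos, hneg])) i₀
    have hinr :
        b (.inr j) = (2 : ℝ) • ((b (.inl i₀) + (2⁻¹ : ℝ) • b (.inr j)) - b (.inl i₀)) := by
      module
    rw [hinr]
    exact Submodule.smul_mem _ _ (Submodule.sub_mem _ htilt_mem (mem_inl i₀))
  rw [eq_top_iff, ← b.span_eq, Submodule.span_le]
  rintro _ ⟨i | j, rfl⟩
  exacts [mem_inl i, mem_inr j]

/-- **The positive `p`-planes span the whole space.**  Let `Q` be a
nondegenerate quadratic form of signature `(p, m)`, `p ≥ 1`, on a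
finite-dimensional real vector space `V`.  Then the union of all
`p`-dimensional subspaces of `V` on which `Q` is positive definite spans `V`. -/
theorem positive_planes_span
    {V : Type*} [AddCommGroup V] [Module ℝ V] [FiniteDimensional ℝ V]
    (p m : ℕ) (hp : 1 ≤ p)
    (Q : QuadraticForm ℝ V) (hsig : HasSignature Q p m) :
    Submodule.span ℝ {v : V | ∃ W : Submodule ℝ V,
      Module.finrank ℝ W = p ∧ (∀ w ∈ W, w ≠ 0 → 0 < Q w) ∧ v ∈ W} = ⊤ :=
  positive_planes_span_general p m hp Q hsig
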